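/- Let a, b, d be complex numbers with a not an integer and d not a nonpositive integer, and extend the Pochhammer symbol by (a)_{-j} = 1/(a-j)_j. Then for all natural numbers m, n, the coefficient of x^m y^n in Η₄(a,b;d;x,y) = ∑_{m,n} ((a)_{m-n}(b)_n/((d)_m m! n!)) x^m y^n equals the corresponding coefficient of ₁F₁(a;d;x)·₁F₁(b;1-a;-y) + ∑_{k≥1}∑_{l=1}^{k} ((-1)^{k+l}(k-1)! (b)_l/((l-1)! l! (k-l)! (1-a)_l (d)_k)) x^k y^l · ₁F₁(a+k;d+k;x)·₁F₁(b+l;1-a+l;-y); explicitly, (a)_{m-n}(b)_n/(m! n!) = (-1)^n (a)_m (b)_n/((1-a)_n m! n!) + ∑_{k=1}^{m} ∑_{l=1}^{min(k,n)} (-1)^{k+n} ((k-1)!/((l-1)! l! (k-l)!)) · (b)_n · (a+k)_{m-k}/((1-a)_n (m-k)! (n-l)!). -/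

import Mathlib

/-! The inner sum over `l` is a Vandermonde convolution,
`∑_l C(k-1, l-1) C(n, l) = C(n+k-1, k) = (n)_k / k!`, so the right-hand side collapses to
`(-1)^n (b)_n / ((1-a)_n m! n!) · ∑_k (-1)^k C(m, k) (n)_k (a+k)_{m-k}`.
By Chu–Vandermonde the last sum is `(a-n)_m`, and the reflection `(1-a)_n = (-1)^n (a-n)_n`
together with `(a)_{m-n} = (a-n)_m / (a-n)_n` turns this into the left-hand side. -/

open Finset

/-- Pochhammer symbol (rising factorial): `(a)_k = a (a+1) ⋯ (a+k-1)`. -/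
noncomputable def poch (a : ℂ) (k : ℕ) : ℂ := ∏ j ∈ Finset.range k, (a + j)

/-- Generalized Pochhammer symbol for integer index:
`(a)_z` is the usual rising factorial for `z ≥ 0`, and `(a)_{-j} = 1/(a-j)_j`. -/
noncomputable def pochZ (a : ℂ) : ℤ → ℂ
  | Int.ofNat k => poch a k
  | Int.negSucc j => 1 / poch (a - (j + 1 : ℕ)) (j + 1)

open Nat Polynomial

theorem poch_eq_eval (a : ℂ) (k : ℕ) : poch a k = (ascPochhammer ℂ k).eval a := by
  induction k with
  | zero => simp [poch]
  | succ k ih => rw [poch, prod_range_succ, ← poch, ih, ascPochhammer_succ_eval]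

theorem poch_add (a : ℂ) (j k : ℕ) : poch a (j + k) = poch a j * poch (a + j) k := by
  simp only [poch, prod_range_add, Nat.cast_add, add_assoc]

theorem poch_ne_zero {x : ℂ} {k : ℕ} (h : ∀ i < k, x + i ≠ 0) : poch x k ≠ 0 :=
  prod_ne_zero_iff.2 fun i hi => h i (mem_range.1 hi)

theorem poch_one_sub (x : ℂ) (n : ℕ) : poch (1 - x) n = (-1) ^ n * poch (x - n) n := by
  rw [poch_eq_eval, poch_eq_eval, show 1 - x = -(x - 1) by ring,
    ascPochhammer_eval_neg_eq_descPochhammer, descPochhammer_eval_eq_ascPochhammer,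
    sub_right_comm, sub_add_cancel]

theorem pochZ_sub_eq_div {a : ℂ} {n : ℕ} (h : poch (a - n) n ≠ 0) (m : ℕ) :
    pochZ a (m - n) = poch (a - n) m / poch (a - n) n := by
  rw [eq_div_iff h]
  rcases le_or_gt n m with hnm | hmn
  · obtain ⟨j, rfl⟩ := Nat.exists_eq_add_of_le hnm
    rw [show ((n + j : ℕ) : ℤ) - n = (j : ℤ) by push_cast; ring, show pochZ a j = poch a j from rfl,
      poch_add, sub_add_cancel, mul_comm]
  · obtain ⟨j, rfl⟩ := Nat.exists_eq_add_of_lt hmn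
    have hsplit : poch (a - ↑(m + j + 1)) (m + j + 1) =
        poch (a - ↑(m + j + 1)) m * poch (a - ↑(j + 1)) (j + 1) := by
      rw [add_assoc, poch_add]; push_cast; ring_nf
    rw [hsplit] at h ⊢
    rw [show (m : ℤ) - ↑(m + j + 1) = Int.negSucc j by push_cast; omega, pochZ,
      one_div_mul_eq_div, mul_div_cancel_right₀ _ (right_ne_zero_of_mul h)]

theorem descPochhammer_smeval_eq_poch (x : ℂ) (j : ℕ) :
    (descPochhammer ℤ j).smeval x = poch (x - j + 1) j := by
  rw [descPochhammer_smeval_eq_ascPochhammer, ascPochhammer_smeval_eq_eval, poch_eq_eval]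

theorem sum_neg_one_pow_mul_choose_mul_poch (a c : ℂ) (m : ℕ) :
    ∑ k ∈ range (m + 1), (-1) ^ k * m.choose k * poch c k * poch (a + k) (m - k) =
      poch (a - c) m := by
  -- `(-1)^k (c)_k` and `(a+k)_{m-k}` are the falling factorials of `-c` and `a + m - 1`
  -- of lengths `k` and `m - k`, so this is the falling-factorial Vandermonde identity.
  have hchu := Ring.descPochhammer_smeval_add (r := -c) (s := a + m - 1) m (Commute.all _ _)
  rw [descPochhammer_smeval_eq_poch, show -c + (a + m - 1) - m + 1 = a - c by ring,
    Nat.sum_antidiagonal_eq_sum_range_succ fun i j => (m.choose i : ℂ) *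
      ((descPochhammer ℤ i).smeval (-c) * (descPochhammer ℤ j).smeval (a + m - 1))] at hchu
  rw [hchu]
  refine sum_congr rfl fun k hk => ?_
  have hkm : k ≤ m := Nat.lt_succ_iff.1 (mem_range.1 hk)
  rw [descPochhammer_smeval_eq_poch, descPochhammer_smeval_eq_poch,
    show -c - k + 1 = 1 - (c + k) by ring, poch_one_sub, add_sub_cancel_right, Nat.cast_sub hkm,
    show a + m - 1 - (m - k) + 1 = a + k by ring]
  ring

theorem sum_Icc_choose_pred_mul_choose {k : ℕ} (hk : 1 ≤ k) (n : ℕ) :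
    ∑ l ∈ Icc 1 (min k n), (k - 1).choose (l - 1) * n.choose l = (n + (k - 1)).choose k := by
  rw [Nat.add_choose_eq,
    Nat.sum_antidiagonal_eq_sum_range_succ fun i j => n.choose i * (k - 1).choose j]
  have hsub : Icc 1 (min k n) ⊆ range (k + 1) := fun l hl => by
    simp only [mem_Icc, mem_range] at hl ⊢; omega
  rw [← sum_subset hsub]
  · refine sum_congr rfl fun l hl => ?_
    obtain ⟨hl1, hlk⟩ : 1 ≤ l ∧ l ≤ k := by simp only [mem_Icc] at hl; omega
    rw [mul_comm, ← Nat.choose_symm (by omega : l - 1 ≤ k - 1)]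
    congr 2; omega
  · intro l hl hl'
    simp only [mem_Icc, mem_range, not_and_or, not_le] at hl hl'
    rcases Nat.eq_zero_or_pos l with rfl | hl0
    · simp [Nat.choose_eq_zero_of_lt (show k - 1 < k by omega)]
    · simp [Nat.choose_eq_zero_of_lt (show n < l by omega)]

theorem sum_Icc_factorial_div {k : ℕ} (hk : 1 ≤ k) (n : ℕ) :
    ∑ l ∈ Icc 1 (min k n),
        ((k - 1)! : ℂ) / ((l - 1)! * l ! * (k - l)!) / (n - l)! = poch n k / (k ! * n !) := by
  have hterm : ∀ l ∈ Icc 1 (min k n), ((k - 1)! : ℂ) / ((l - 1)! * l ! * (k - l)!) / (n - l)! =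
      ((k - 1).choose (l - 1) * n.choose l : ℕ) / n ! := by
    intro l hl
    obtain ⟨hl1, hlk, hln⟩ : 1 ≤ l ∧ l ≤ k ∧ l ≤ n := by simp only [mem_Icc] at hl; omega
    rw [Nat.cast_mul, Nat.cast_choose ℂ hln, Nat.cast_choose ℂ (by omega : l - 1 ≤ k - 1),
      show k - 1 - (l - 1) = k - l by omega]
    have : (n ! : ℂ) ≠ 0 := Nat.cast_ne_zero.2 n.factorial_ne_zero
    field_simp
  rw [sum_congr rfl hterm, ← sum_div, ← Nat.cast_sum, sum_Icc_choose_pred_mul_choose hk,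
    Nat.cast_choose_eq_ascPochhammer_div, Nat.add_sub_cancel, ← poch_eq_eval, div_div]

theorem sum_Icc_min_H4_term_eq (a b : ℂ) {m k : ℕ} (hk : k ∈ Icc 1 m) (n : ℕ) :
    ∑ l ∈ Icc 1 (min k n),
      (-1 : ℂ) ^ (k + n) * (((k - 1)! : ℂ) / ((l - 1)! * l ! * (k - l)!)) *
        poch b n * poch (a + k) (m - k) / (poch (1 - a) n * (m - k)! * (n - l)!) =
      (-1) ^ n * poch b n / (poch (1 - a) n * m ! * n !) *
        ((-1) ^ k * m.choose k * poch n k * poch (a + k) (m - k)) := by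
  obtain ⟨hk1, hkm⟩ := mem_Icc.1 hk
  have : (m ! : ℂ) ≠ 0 := Nat.cast_ne_zero.2 m.factorial_ne_zero
  calc _ = (-1 : ℂ) ^ (k + n) * poch b n * poch (a + k) (m - k) / (poch (1 - a) n * (m - k)!) *
        ∑ l ∈ Icc 1 (min k n), ((k - 1)! : ℂ) / ((l - 1)! * l ! * (k - l)!) / (n - l)! := by
        rw [mul_sum]; exact sum_congr rfl fun l _ => by ring
    _ = _ := by
        rw [sum_Icc_factorial_div hk1, Nat.cast_choose ℂ hkm]
        field_simp
        ring

theorem H4_decomposition_general (a b : ℂ) (ha : ∀ z : ℤ, a ≠ (z : ℂ)) (m n : ℕ) :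
    pochZ a ((m : ℤ) - n) * poch b n / ((m.factorial : ℂ) * (n.factorial : ℂ)) =
      (-1 : ℂ) ^ n * poch a m * poch b n /
          (poch (1 - a) n * (m.factorial : ℂ) * (n.factorial : ℂ)) +
        ∑ k ∈ Finset.Icc 1 m, ∑ l ∈ Finset.Icc 1 (min k n),
          (-1 : ℂ) ^ (k + n) *
            (((k - 1).factorial : ℂ) /
              (((l - 1).factorial : ℂ) * (l.factorial : ℂ) * ((k - l).factorial : ℂ))) *
            poch b n * poch (a + k) (m - k) /
            (poch (1 - a) n * ((m - k).factorial : ℂ) * ((n - l).factorial : ℂ)) := by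
  have hne : poch (a - n) n ≠ 0 :=
    poch_ne_zero fun i _ h => ha (n - i) (by push_cast; linear_combination h)
  calc pochZ a ((m : ℤ) - n) * poch b n / ((m ! : ℂ) * n !)
      = (-1) ^ n * poch b n / (poch (1 - a) n * m ! * n !) * poch (a - n) m := by
        rw [pochZ_sub_eq_div hne, poch_one_sub]
        field_simp
    _ = (-1) ^ n * poch b n / (poch (1 - a) n * m ! * n !) *
          ∑ k ∈ range (m + 1), (-1) ^ k * m.choose k * poch n k * poch (a + k) (m - k) := by
        rw [sum_neg_one_pow_mul_choose_mul_poch]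
    _ = _ := by
        rw [range_eq_Ico, sum_eq_sum_Ico_succ_bot (Nat.succ_pos m), zero_add, Nat.succ_eq_add_one,
          Ico_add_one_right_eq_Icc, mul_add, mul_sum,
          sum_congr rfl fun k hk => sum_Icc_min_H4_term_eq a b hk n]
        congr 1
        simp only [pow_zero, Nat.choose_zero_right, Nat.cast_one, Nat.cast_zero, add_zero,
          Nat.sub_zero, show poch (n : ℂ) 0 = 1 from prod_range_zero _]
        ring

/-- Decomposition formula (3.21) for `Η₄(a,b;d;x,y)`, coefficient of `x^m y^n`
(after the cancellations `(b)_l(b+l)_{n-l} = (b)_n`, `(d)_k(d+k)_{m-k} = (d)_m`,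
`(1-a)_l(1-a+l)_{n-l} = (1-a)_n`). -/
theorem H4_decomposition (a b d : ℂ) (ha : ∀ z : ℤ, a ≠ (z : ℂ))
    (hd : ∀ j : ℕ, d ≠ -(j : ℂ)) (m n : ℕ) :
    pochZ a ((m : ℤ) - n) * poch b n / ((m.factorial : ℂ) * (n.factorial : ℂ)) =
      (-1 : ℂ) ^ n * poch a m * poch b n /
          (poch (1 - a) n * (m.factorial : ℂ) * (n.factorial : ℂ)) +
        ∑ k ∈ Finset.Icc 1 m, ∑ l ∈ Finset.Icc 1 (min k n),
          (-1 : ℂ) ^ (k + n) *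
            (((k - 1).factorial : ℂ) /
              (((l - 1).factorial : ℂ) * (l.factorial : ℂ) * ((k - l).factorial : ℂ))) *
            poch b n * poch (a + k) (m - k) /
            (poch (1 - a) n * ((m - k).factorial : ℂ) * ((n - l).factorial : ℂ)) :=
  H4_decomposition_general a b ha m n
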